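/- Let q, r : ℝ² → ℂ be smooth with coordinates (x₁, x₃), and let L₃₁ = (1/2)(q·∂₃r − r·∂₃q) + (1/8)((∂₁r)(∂₁²q) − (∂₁q)(∂₁²r)) + (3/8)qr(r∂₁q − q∂₁r). Then the Euler–Lagrange equations of L₃₁ with respect to q and r are ∂₃r = (3/2)rq·∂₁r − (1/4)∂₁³r and ∂₃q = (3/2)qr·∂₁q − (1/4)∂₁³q (the second AKNS flow, i.e. the coupled mKdV-type system). -/

import Mathlib

open Complex

/-- Coordinates are `(x₁, x₃)`: `D1` is `∂₁` and `D3` is `∂₃`. -/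
noncomputable def D1 (u : ℝ → ℝ → ℂ) : ℝ → ℝ → ℂ := fun x t => deriv (fun s => u s t) x
noncomputable def D3 (u : ℝ → ℝ → ℂ) : ℝ → ℝ → ℂ := fun x t => deriv (fun s => u x s) t

/-- The AKNS Lagrangian `L₃₁` as a function of the jet variables
`(q, r, q₁, r₁, q₁₁, r₁₁, q₃, r₃)`. -/
noncomputable def L31 : ℂ → ℂ → ℂ → ℂ → ℂ → ℂ → ℂ → ℂ → ℂ :=
  fun q r q1 r1 q11 r11 q3 r3 =>
    (1 / 2) * (q * r3 - r * q3) + (1 / 8) * (r1 * q11 - q1 * r11)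
      + (3 / 8) * q * r * (r * q1 - q * r1)

/-- Slot derivatives of an eight-argument function of the jet variables. -/
noncomputable def S1 (F : ℂ → ℂ → ℂ → ℂ → ℂ → ℂ → ℂ → ℂ → ℂ) :
    ℂ → ℂ → ℂ → ℂ → ℂ → ℂ → ℂ → ℂ → ℂ :=
  fun a b c d e f g h => deriv (fun t => F t b c d e f g h) a
noncomputable def S2 (F : ℂ → ℂ → ℂ → ℂ → ℂ → ℂ → ℂ → ℂ → ℂ) :
    ℂ → ℂ → ℂ → ℂ → ℂ → ℂ → ℂ → ℂ → ℂ :=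
  fun a b c d e f g h => deriv (fun t => F a t c d e f g h) b
noncomputable def S3 (F : ℂ → ℂ → ℂ → ℂ → ℂ → ℂ → ℂ → ℂ → ℂ) :
    ℂ → ℂ → ℂ → ℂ → ℂ → ℂ → ℂ → ℂ → ℂ :=
  fun a b c d e f g h => deriv (fun t => F a b t d e f g h) c
noncomputable def S4 (F : ℂ → ℂ → ℂ → ℂ → ℂ → ℂ → ℂ → ℂ → ℂ) :
    ℂ → ℂ → ℂ → ℂ → ℂ → ℂ → ℂ → ℂ → ℂ :=
  fun a b c d e f g h => deriv (fun t => F a b c t e f g h) d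
noncomputable def S5 (F : ℂ → ℂ → ℂ → ℂ → ℂ → ℂ → ℂ → ℂ → ℂ) :
    ℂ → ℂ → ℂ → ℂ → ℂ → ℂ → ℂ → ℂ → ℂ :=
  fun a b c d e f g h => deriv (fun t => F a b c d t f g h) e
noncomputable def S6 (F : ℂ → ℂ → ℂ → ℂ → ℂ → ℂ → ℂ → ℂ → ℂ) :
    ℂ → ℂ → ℂ → ℂ → ℂ → ℂ → ℂ → ℂ → ℂ :=
  fun a b c d e f g h => deriv (fun t => F a b c d e t g h) f
noncomputable def S7 (F : ℂ → ℂ → ℂ → ℂ → ℂ → ℂ → ℂ → ℂ → ℂ) :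
    ℂ → ℂ → ℂ → ℂ → ℂ → ℂ → ℂ → ℂ → ℂ :=
  fun a b c d e f g h => deriv (fun t => F a b c d e f t h) g
noncomputable def S8 (F : ℂ → ℂ → ℂ → ℂ → ℂ → ℂ → ℂ → ℂ → ℂ) :
    ℂ → ℂ → ℂ → ℂ → ℂ → ℂ → ℂ → ℂ → ℂ :=
  fun a b c d e f g h => deriv (fun t => F a b c d e f g t) h

/-- Composition along the fields `q, r` and their derivatives. -/
noncomputable def C (q r : ℝ → ℝ → ℂ) (F : ℂ → ℂ → ℂ → ℂ → ℂ → ℂ → ℂ → ℂ → ℂ) :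
    ℝ → ℝ → ℂ :=
  fun x t => F (q x t) (r x t) (D1 q x t) (D1 r x t)
    (D1 (D1 q) x t) (D1 (D1 r) x t) (D3 q x t) (D3 r x t)


section Aux

lemma dquad (A B C a : ℂ) : deriv (fun t : ℂ => A*t^2 + B*t + C) a = 2*A*a + B := by
  have h1 : HasDerivAt (fun t : ℂ => A*t^2) (A*(2*a^1)) a := (hasDerivAt_pow 2 a).const_mul A
  have h2 : HasDerivAt (fun t : ℂ => B*t) (B*1) a := (hasDerivAt_id a).const_mul B
  have h : HasDerivAt (fun t : ℂ => A*t^2 + B*t + C) (A*(2*a^1) + B*1) a := (h1.add h2).add_const C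
  rw [h.deriv]; ring

lemma hasDerivAt_partial1 {u : ℝ → ℝ → ℂ} (hu : ContDiff ℝ (⊤ : ℕ∞) (Function.uncurry u)) (x t : ℝ) :
    HasDerivAt (fun s => u s t) (fderiv ℝ (Function.uncurry u) (x, t) (1, 0)) x := by
  have h := (hu.differentiable (by simp) (x, t)).hasFDerivAt
  have hline : HasDerivAt (fun s : ℝ => (s, t)) ((1 : ℝ), (0 : ℝ)) x :=
    (hasDerivAt_id x).prodMk (hasDerivAt_const x t)
  exact h.comp_hasDerivAt x hline

lemma D1_smooth {u : ℝ → ℝ → ℂ} (hu : ContDiff ℝ (⊤ : ℕ∞) (Function.uncurry u)) :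
    ContDiff ℝ (⊤ : ℕ∞) (Function.uncurry (D1 u)) := by
  have he : Function.uncurry (D1 u)
      = fun p : ℝ × ℝ => fderiv ℝ (Function.uncurry u) p ((1 : ℝ), (0 : ℝ)) := by
    funext p
    exact (hasDerivAt_partial1 hu p.1 p.2).deriv
  rw [he]
  exact (hu.fderiv_right (by simp)).clm_apply contDiff_const

lemma D1_hasDerivAt {u : ℝ → ℝ → ℂ} (hu : ContDiff ℝ (⊤ : ℕ∞) (Function.uncurry u)) (x t : ℝ) :
    HasDerivAt (fun s => u s t) (D1 u x t) x := by
  have h := hasDerivAt_partial1 hu x t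
  simpa [D1, h.deriv] using h

lemma S1L (a b c d e f g h : ℂ) :
    S1 L31 a b c d e f g h = (1/2)*h + (3/8)*(b^2*c) - (3/4)*(a*b*d) := by
  have he : (fun t : ℂ => L31 t b c d e f g h)
      = fun t => (-(3/8)*(b*d))*t^2 + ((1/2)*h + (3/8)*(b^2*c))*t
          + ((1/8)*(d*e - c*f) - (1/2)*(b*g)) := by
    funext t; simp only [L31]; ring
  simp only [S1]; rw [he, dquad]; ring

lemma S2L (a b c d e f g h : ℂ) :
    S2 L31 a b c d e f g h = (3/4)*(a*b*c) - (1/2)*g - (3/8)*(a^2*d) := by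
  have he : (fun t : ℂ => L31 a t c d e f g h)
      = fun t => ((3/8)*(a*c))*t^2 + (-(1/2)*g - (3/8)*(a^2*d))*t
          + ((1/2)*(a*h) + (1/8)*(d*e - c*f)) := by
    funext t; simp only [L31]; ring
  simp only [S2]; rw [he, dquad]; ring

lemma S3L (a b c d e f g h : ℂ) :
    S3 L31 a b c d e f g h = -(1/8)*f + (3/8)*(a*b^2) := by
  have he : (fun t : ℂ => L31 a b t d e f g h)
      = fun t => (0 : ℂ)*t^2 + (-(1/8)*f + (3/8)*(a*b^2))*t
          + ((1/2)*(a*h - b*g) + (1/8)*(d*e) - (3/8)*(a^2*b*d)) := by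
    funext t; simp only [L31]; ring
  simp only [S3]; rw [he, dquad]; ring

lemma S4L (a b c d e f g h : ℂ) :
    S4 L31 a b c d e f g h = (1/8)*e - (3/8)*(a^2*b) := by
  have he : (fun t : ℂ => L31 a b c t e f g h)
      = fun t => (0 : ℂ)*t^2 + ((1/8)*e - (3/8)*(a^2*b))*t
          + ((1/2)*(a*h - b*g) - (1/8)*(c*f) + (3/8)*(a*b^2*c)) := by
    funext t; simp only [L31]; ring
  simp only [S4]; rw [he, dquad]; ring

lemma S5L (a b c d e f g h : ℂ) : S5 L31 a b c d e f g h = (1/8)*d := by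
  have he : (fun t : ℂ => L31 a b c d t f g h)
      = fun t => (0 : ℂ)*t^2 + ((1/8)*d)*t
          + ((1/2)*(a*h - b*g) - (1/8)*(c*f) + (3/8)*a*b*(b*c - a*d)) := by
    funext t; simp only [L31]; ring
  simp only [S5]; rw [he, dquad]; ring

lemma S6L (a b c d e f g h : ℂ) : S6 L31 a b c d e f g h = -(1/8)*c := by
  have he : (fun t : ℂ => L31 a b c d e t g h)
      = fun t => (0 : ℂ)*t^2 + (-(1/8)*c)*t
          + ((1/2)*(a*h - b*g) + (1/8)*(d*e) + (3/8)*a*b*(b*c - a*d)) := by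
    funext t; simp only [L31]; ring
  simp only [S6]; rw [he, dquad]; ring

lemma S7L (a b c d e f g h : ℂ) : S7 L31 a b c d e f g h = -(1/2)*b := by
  have he : (fun t : ℂ => L31 a b c d e f t h)
      = fun t => (0 : ℂ)*t^2 + (-(1/2)*b)*t
          + ((1/2)*(a*h) + (1/8)*(d*e - c*f) + (3/8)*a*b*(b*c - a*d)) := by
    funext t; simp only [L31]; ring
  simp only [S7]; rw [he, dquad]; ring

lemma S8L (a b c d e f g h : ℂ) : S8 L31 a b c d e f g h = (1/2)*a := by
  have he : (fun t : ℂ => L31 a b c d e f g t)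
      = fun t => (0 : ℂ)*t^2 + ((1/2)*a)*t
          + (-(1/2)*(b*g) + (1/8)*(d*e - c*f) + (3/8)*a*b*(b*c - a*d)) := by
    funext t; simp only [L31]; ring
  simp only [S8]; rw [he, dquad]; ring

lemma ELq (q r : ℝ → ℝ → ℂ)
    (hq : ContDiff ℝ (⊤ : ℕ∞) (Function.uncurry q)) (hr : ContDiff ℝ (⊤ : ℕ∞) (Function.uncurry r))
    (x t : ℝ) :
    C q r (S1 L31) x t - D1 (C q r (S3 L31)) x t - D3 (C q r (S7 L31)) x t
        + D1 (D1 (C q r (S5 L31))) x t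
      = D3 r x t + (1/4)*D1 (D1 (D1 r)) x t - (3/2)*(q x t)*(r x t)*(D1 r x t) := by
  have hq0 : HasDerivAt (fun s => q s t) (D1 q x t) x := D1_hasDerivAt hq x t
  have hr0 : HasDerivAt (fun s => r s t) (D1 r x t) x := D1_hasDerivAt hr x t
  have hr3 : HasDerivAt (fun s => D1 (D1 r) s t) (D1 (D1 (D1 r)) x t) x :=
    D1_hasDerivAt (D1_smooth (D1_smooth hr)) x t
  have e1 : C q r (S1 L31) x t
      = (1/2)*D3 r x t + (3/8)*((r x t)^2*D1 q x t) - (3/4)*(q x t*r x t*D1 r x t) := by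
    simp only [C]; rw [S1L]
  have e3 : D1 (C q r (S3 L31)) x t
      = -(1/8)*D1 (D1 (D1 r)) x t
        + (3/8)*(D1 q x t*(r x t)^2 + 2*(q x t)*(r x t)*(D1 r x t)) := by
    show deriv (fun s => C q r (S3 L31) s t) x = _
    rw [show (fun s => C q r (S3 L31) s t)
        = fun s => -(1/8)*D1 (D1 r) s t + (3/8)*(q s t*(r s t*r s t)) from by
      funext s; simp only [C]; rw [S3L]; ring]
    have H := (hr3.const_mul (-(1/8) : ℂ)).add ((hq0.mul (hr0.mul hr0)).const_mul ((3/8) : ℂ))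
    exact H.deriv.trans (by simp only [Pi.mul_apply]; ring)
  have e7 : D3 (C q r (S7 L31)) x t = -(1/2)*D3 r x t := by
    show deriv (fun s => C q r (S7 L31) x s) t = _
    rw [show (fun s => C q r (S7 L31) x s) = fun s => -(1/2)*(r x s) from by
      funext s; simp only [C]; rw [S7L]]
    rw [deriv_const_mul_field]; rfl
  have hin : D1 (C q r (S5 L31)) = fun y s => (1/8)*D1 (D1 r) y s := by
    funext y s
    show deriv (fun z => C q r (S5 L31) z s) y = _
    rw [show (fun z => C q r (S5 L31) z s) = fun z => (1/8)*D1 r z s from by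
      funext z; simp only [C]; rw [S5L]]
    rw [deriv_const_mul_field]; rfl
  have e5 : D1 (D1 (C q r (S5 L31))) x t = (1/8)*D1 (D1 (D1 r)) x t := by
    rw [hin]
    show deriv (fun z => (1/8)*D1 (D1 r) z t) x = _
    rw [deriv_const_mul_field]; rfl
  rw [e1, e3, e7, e5]; ring

lemma ELr (q r : ℝ → ℝ → ℂ)
    (hq : ContDiff ℝ (⊤ : ℕ∞) (Function.uncurry q)) (hr : ContDiff ℝ (⊤ : ℕ∞) (Function.uncurry r))
    (x t : ℝ) :
    C q r (S2 L31) x t - D1 (C q r (S4 L31)) x t - D3 (C q r (S8 L31)) x t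
        + D1 (D1 (C q r (S6 L31))) x t
      = -(D3 q x t + (1/4)*D1 (D1 (D1 q)) x t - (3/2)*(q x t)*(r x t)*(D1 q x t)) := by
  have hq0 : HasDerivAt (fun s => q s t) (D1 q x t) x := D1_hasDerivAt hq x t
  have hr0 : HasDerivAt (fun s => r s t) (D1 r x t) x := D1_hasDerivAt hr x t
  have hq3 : HasDerivAt (fun s => D1 (D1 q) s t) (D1 (D1 (D1 q)) x t) x :=
    D1_hasDerivAt (D1_smooth (D1_smooth hq)) x t
  have e2 : C q r (S2 L31) x t
      = (3/4)*(q x t*r x t*D1 q x t) - (1/2)*D3 q x t - (3/8)*((q x t)^2*D1 r x t) := by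
    simp only [C]; rw [S2L]
  have e4 : D1 (C q r (S4 L31)) x t
      = (1/8)*D1 (D1 (D1 q)) x t
        - (3/8)*(2*(q x t)*(D1 q x t)*(r x t) + (q x t)^2*(D1 r x t)) := by
    show deriv (fun s => C q r (S4 L31) s t) x = _
    rw [show (fun s => C q r (S4 L31) s t)
        = fun s => (1/8)*D1 (D1 q) s t - (3/8)*((q s t*q s t)*r s t) from by
      funext s; simp only [C]; rw [S4L]; ring]
    have H := (hq3.const_mul ((1/8) : ℂ)).sub (((hq0.mul hq0).mul hr0).const_mul ((3/8) : ℂ))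
    exact H.deriv.trans (by simp only [Pi.mul_apply]; ring)
  have e8 : D3 (C q r (S8 L31)) x t = (1/2)*D3 q x t := by
    show deriv (fun s => C q r (S8 L31) x s) t = _
    rw [show (fun s => C q r (S8 L31) x s) = fun s => (1/2)*(q x s) from by
      funext s; simp only [C]; rw [S8L]]
    rw [deriv_const_mul_field]; rfl
  have hin : D1 (C q r (S6 L31)) = fun y s => -(1/8)*D1 (D1 q) y s := by
    funext y s
    show deriv (fun z => C q r (S6 L31) z s) y = _
    rw [show (fun z => C q r (S6 L31) z s) = fun z => -(1/8)*D1 q z s from by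
      funext z; simp only [C]; rw [S6L]]
    rw [deriv_const_mul_field]; rfl
  have e6 : D1 (D1 (C q r (S6 L31))) x t = -(1/8)*D1 (D1 (D1 q)) x t := by
    rw [hin]
    show deriv (fun z => -(1/8)*D1 (D1 q) z t) x = _
    rw [deriv_const_mul_field]; rfl
  rw [e2, e4, e8, e6]; ring

end Aux

/-- The Euler–Lagrange equations of `L₃₁` (with respect to `q` and `r`) are exactly the
second AKNS flow, i.e. the coupled mKdV-type system. -/
theorem stmt_8 (q r : ℝ → ℝ → ℂ)
    (hq : ContDiff ℝ (⊤ : ℕ∞) (Function.uncurry q)) (hr : ContDiff ℝ (⊤ : ℕ∞) (Function.uncurry r)) :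
    ((∀ x t : ℝ,
        C q r (S1 L31) x t - D1 (C q r (S3 L31)) x t - D3 (C q r (S7 L31)) x t
          + D1 (D1 (C q r (S5 L31))) x t = 0
        ∧ C q r (S2 L31) x t - D1 (C q r (S4 L31)) x t - D3 (C q r (S8 L31)) x t
          + D1 (D1 (C q r (S6 L31))) x t = 0)
      ↔ (∀ x t : ℝ,
        D3 r x t = (3 / 2) * r x t * q x t * D1 r x t - (1 / 4) * D1 (D1 (D1 r)) x t
        ∧ D3 q x t = (3 / 2) * q x t * r x t * D1 q x t - (1 / 4) * D1 (D1 (D1 q)) x t)) := by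
  constructor
  · intro h x t
    obtain ⟨h1, h2⟩ := h x t
    rw [ELq q r hq hr x t] at h1
    rw [ELr q r hq hr x t] at h2
    exact ⟨by linear_combination h1, by linear_combination -h2⟩
  · intro h x t
    obtain ⟨h1, h2⟩ := h x t
    rw [ELq q r hq hr x t, ELr q r hq hr x t]
    exact ⟨by linear_combination h1, by linear_combination -h2⟩
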